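/- Let n be a positive integer and let s_1, s_2, …, s_n be independent random variables, each uniformly distributed on {1, 2, …, n}. Let y = max{k : 1 ≤ k ≤ n and s_1, …, s_k are pairwise distinct}. Then the probability that the value 1 appears among s_1, …, s_y (i.e., before the first repetition) equals R_1(n)/n = (1/n)·Σ_{k=1}^{n} p_k(n)·k. -/

import Mathlib

open scoped Classical

/-- `p_k(n) = n!·k/((n−k)!·n^(k+1))`. -/
noncomputable def p (n k : ℕ) : ℝ :=
  (n.factorial : ℝ) * k / (((n - k).factorial : ℝ) * (n : ℝ) ^ (k + 1))

/-- `R_1(n) = Σ_{k=1}^{n} p_k(n)·k`. -/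
noncomputable def R1 (n : ℕ) : ℝ := ∑ k ∈ Finset.Icc 1 n, p n k * (k : ℝ)

/-- The first `m` values `s_1, …, s_m` of `s` are pairwise distinct, with `1 ≤ m ≤ n`. -/
def prefixDistinct (n : ℕ) (s : Fin n → Fin n) (m : ℕ) : Prop :=
  1 ≤ m ∧ m ≤ n ∧ ∀ i j : Fin n, (i : ℕ) < m → (j : ℕ) < m → s i = s j → i = j

/-- `y(s) = max{k : 1 ≤ k ≤ n and s_1, …, s_k are pairwise distinct}`. -/
noncomputable def y (n : ℕ) (s : Fin n → Fin n) : ℕ :=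
  Nat.findGreatest (prefixDistinct n s) n

/-!
Relabelling the values by a permutation of `Fin n` does not change `y`, so the probability that
a given value appears among `s_1, …, s_y` is the same for every value. Summing over all values
counts each sequence `s` exactly `y(s)` times, so this probability is `E[y] / n`. Finally
`y ≥ k` iff the first `k` values are distinct, so `P(y ≥ k) = n (n-1) ⋯ (n-k+1) / n^k`, and the
differences `P(y = k)` are exactly the `p_k(n)`, giving `E[y] = R_1(n)`.
-/

open Finset

theorem card_filter_injOn_setOf {ι β : Type*} [Fintype ι] [DecidableEq ι] [Fintype β]
    (p : ι → Prop) [DecidablePred p] :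
    #{f : ι → β | Set.InjOn f {i | p i}} =
      (Fintype.card β).descFactorial (Fintype.card {i // p i}) *
        Fintype.card β ^ Fintype.card {i // ¬p i} := by
  rw [← Fintype.card_subtype,
    Fintype.card_congr ((Equiv.piEquivPiSubtypeProd p fun _ => β).subtypeEquiv
      (p := fun f => Set.InjOn f {i | p i}) (q := fun g => Function.Injective g.1)
      fun _ => Set.injOn_iff_injective),
    Fintype.card_congr Equiv.prodSubtypeFstEquivSubtypeProd, Fintype.card_prod,
    Fintype.card_congr (Equiv.subtypeInjectiveEquivEmbedding _ _), Fintype.card_embedding_eq,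
    Fintype.card_fun]

theorem Fin.card_subtype_val_lt {n k : ℕ} (hk : k ≤ n) :
    Fintype.card {i : Fin n // (i : ℕ) < k} = k := by
  rw [Fintype.card_subtype, Fin.card_filter_val_lt, min_eq_right hk]

theorem Fin.card_subtype_not_val_lt {n k : ℕ} (hk : k ≤ n) :
    Fintype.card {i : Fin n // ¬(i : ℕ) < k} = n - k := by
  rw [Fintype.card_subtype_compl, Fin.card_subtype_val_lt hk, Fintype.card_fin]

theorem p_mul_pow_succ {n k : ℕ} (hn : 0 < n) (hk : k ≤ n) :
    p n k * (n : ℝ) ^ (k + 1) = k * n.descFactorial k := by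
  rw [p, ← Nat.factorial_mul_descFactorial hk]
  field_simp
  push_cast
  ring

section FirstRepetition

variable {n k : ℕ} (s : Fin n → Fin n)

theorem y_le : y n s ≤ n := Nat.findGreatest_le n

theorem injOn_lt_y : Set.InjOn s {i | (i : ℕ) < y n s} := by
  intro i (hi : (i : ℕ) < y n s) j hj hij
  have hy : prefixDistinct n s (y n s) := Nat.findGreatest_of_ne_zero rfl (by omega)
  exact hy.2.2 i j hi hj hij

theorem le_y_iff (hk : 1 ≤ k) (hkn : k ≤ n) : k ≤ y n s ↔ Set.InjOn s {i | (i : ℕ) < k} :=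
  ⟨fun h => (injOn_lt_y s).mono fun i (hi : (i : ℕ) < k) => lt_of_lt_of_le hi h,
    fun h => Nat.le_findGreatest hkn ⟨hk, hkn, fun _ _ hi hj hij => h hi hj hij⟩⟩

theorem one_le_y (hn : 0 < n) : 1 ≤ y n s :=
  (le_y_iff s le_rfl hn).2 fun i (hi : (i : ℕ) < 1) j (hj : (j : ℕ) < 1) _ => Fin.ext (by omega)

-- Multiplied out by `n ^ k`, this also holds for `k > n`, where both sides vanish.
variable (n) in
theorem card_le_y_mul_pow (hk : 1 ≤ k) :
    #{s : Fin n → Fin n | k ≤ y n s} * n ^ k = n.descFactorial k * n ^ n := by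
  rcases le_or_gt k n with hkn | hnk
  · rw [filter_congr fun s _ => le_y_iff s hk hkn, card_filter_injOn_setOf,
      Fin.card_subtype_val_lt hkn, Fin.card_subtype_not_val_lt hkn, Fintype.card_fin, mul_assoc,
      pow_sub_mul_pow _ hkn]
  · rw [Nat.descFactorial_eq_zero_iff_lt.2 hnk, filter_false_of_mem fun s _ => by
      have := y_le s; omega]
    simp

variable (n) in
theorem card_y_eq (hn : 0 < n) (hk : 1 ≤ k) (hkn : k ≤ n) :
    (#{s : Fin n → Fin n | y n s = k} : ℝ) = p n k * n ^ n := by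
  have hsplit : #{s : Fin n → Fin n | k ≤ y n s} =
      #{s : Fin n → Fin n | y n s = k} + #{s : Fin n → Fin n | k + 1 ≤ y n s} := by
    rw [← card_filter_add_card_filter_not (s := {s : Fin n → Fin n | k ≤ y n s})
      (fun s => y n s = k), filter_filter, filter_filter]
    congr 2 <;> ext s <;> simp only [mem_filter, mem_univ, true_and] <;> omega
  have hge := congrArg (Nat.cast (R := ℝ)) (card_le_y_mul_pow n hk)
  have hge_succ := congrArg (Nat.cast (R := ℝ)) (card_le_y_mul_pow n (k := k + 1) (by omega))
  rw [hsplit] at hge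
  rw [Nat.descFactorial_succ] at hge_succ
  push_cast [Nat.cast_sub hkn] at hge hge_succ
  have hpos : (0 : ℝ) < n ^ (k + 1) := by positivity
  refine mul_right_cancel₀ hpos.ne' ?_
  linear_combination (n : ℝ) * hge - hge_succ - n ^ n * p_mul_pow_succ hn hkn

theorem y_comp_of_injective {f : Fin n → Fin n} (hf : Function.Injective f) :
    y n (f ∘ s) = y n s := by
  have hpred : prefixDistinct n (f ∘ s) = prefixDistinct n s := by
    funext m
    simp only [prefixDistinct, Function.comp_apply, hf.eq_iff]
  simp only [y, hpred]

theorem card_values_before_y :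
    #{z : Fin n | ∃ i : Fin n, (i : ℕ) < y n s ∧ s i = z} = y n s := by
  have himage : ({z : Fin n | ∃ i : Fin n, (i : ℕ) < y n s ∧ s i = z} : Finset (Fin n)) =
      image s {i : Fin n | (i : ℕ) < y n s} := by
    ext z
    simp
  rw [himage, card_image_of_injOn (by simpa using injOn_lt_y s), Fin.card_filter_val_lt,
    min_eq_right (y_le s)]

theorem card_appears_before_y_apply_perm (σ : Equiv.Perm (Fin n)) (z : Fin n) :
    #{s : Fin n → Fin n | ∃ i : Fin n, (i : ℕ) < y n s ∧ s i = σ z} =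
      #{s : Fin n → Fin n | ∃ i : Fin n, (i : ℕ) < y n s ∧ s i = z} := by
  have hmaps (f : Equiv.Perm (Fin n)) (s : Fin n → Fin n) (z : Fin n) :
      (∃ i : Fin n, (i : ℕ) < y n s ∧ s i = z) →
        ∃ i : Fin n, (i : ℕ) < y n (f ∘ s) ∧ (f ∘ s) i = f z := by
    rw [y_comp_of_injective s f.injective]
    exact fun ⟨i, hi, hsi⟩ => ⟨i, hi, congrArg f hsi⟩
  refine card_nbij' (σ.symm ∘ ·) (σ ∘ ·) (fun s hs => ?_) (fun s hs => ?_) (fun s _ => ?_)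
    (fun s _ => ?_)
  · simpa using hmaps σ.symm s (σ z) (by simpa using hs)
  · simpa using hmaps σ s z (by simpa using hs)
  · ext; simp
  · ext; simp

variable (n) in
theorem sum_y_eq_mul_card_appears_before_y (z : Fin n) :
    ∑ s : Fin n → Fin n, y n s =
      n * #{s : Fin n → Fin n | ∃ i : Fin n, (i : ℕ) < y n s ∧ s i = z} := by
  let r (s : Fin n → Fin n) (z : Fin n) : Prop := ∃ i : Fin n, (i : ℕ) < y n s ∧ s i = z
  calc ∑ s, y n s = ∑ s, #(univ.bipartiteAbove r s) :=
        sum_congr rfl fun s _ => (card_values_before_y s).symm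
    _ = ∑ z', #(univ.bipartiteBelow r z') :=
        sum_card_bipartiteAbove_eq_sum_card_bipartiteBelow r
    _ = ∑ z' : Fin n, #{s : Fin n → Fin n | r s z} := sum_congr rfl fun z' _ => by
        simpa [Finset.bipartiteBelow, r] using card_appears_before_y_apply_perm (Equiv.swap z z') z
    _ = n * #{s : Fin n → Fin n | r s z} := by simp

variable (n) in
theorem sum_y_eq_pow_mul_R1 (hn : 0 < n) :
    ∑ s : Fin n → Fin n, (y n s : ℝ) = n ^ n * R1 n := by
  rw [← sum_fiberwise_of_maps_to (t := Icc 1 n) (g := y n)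
    fun s _ => mem_Icc.2 ⟨one_le_y s hn, y_le s⟩, R1, mul_sum]
  refine sum_congr rfl fun k hk => ?_
  rw [mem_Icc] at hk
  rw [sum_congr rfl fun s hs => by rw [(mem_filter.1 hs).2], sum_const, nsmul_eq_mul,
    card_y_eq n hn hk.1 hk.2]
  ring

end FirstRepetition

/-- Under the uniform distribution on sequences `s : Fin n → Fin n` (i.e. `n` independent
uniform values on `{1,…,n}`), the probability that the value `1` appears among
`s_1, …, s_y` (i.e. before the first repetition) equals `R_1(n)/n = (1/n)·Σ_{k=1}^n p_k(n)·k`. -/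
theorem prob_one_appears_before_first_repetition (n : ℕ) (hn : 0 < n) :
    ((Finset.univ.filter fun s : Fin n → Fin n =>
        ∃ i : Fin n, (i : ℕ) < y n s ∧ s i = ⟨0, hn⟩).card : ℝ) / (n : ℝ) ^ n
      = R1 n / (n : ℝ) := by
  have hcount : (∑ s : Fin n → Fin n, (y n s : ℝ)) = n * #{s : Fin n → Fin n |
      ∃ i : Fin n, (i : ℕ) < y n s ∧ s i = ⟨0, hn⟩} := by
    exact_mod_cast sum_y_eq_mul_card_appears_before_y n ⟨0, hn⟩
  rw [sum_y_eq_pow_mul_R1 n hn] at hcount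
  field_simp
  linear_combination hcount.symm
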